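/- arXiv:1812.05750 — 5 statements merged into one kernel-verified Lean document; each statement's English description precedes it below -/
import Mathlib

section
/- Let $G$ be the graph on vertex set $\{1,\dots,n\}$ where $i$ and $j$ are adjacent iff $|i-j|$ is a power of two. Then $G$ contains no four vertices $a<b<c<d$ such that $ad$, $ac$, and $bd$ are all edges of $G$. -/
/-- The graph on {1,…,n} with i ~ j iff |i-j| is a power of two contains
no four vertices a<b<c<d with ad, ac, bd all edges. -/
theorem stmt_1 (n : ℕ) (G : SimpleGraph (Fin n))
    (hG : ∀ i j : Fin n, G.Adj i j ↔ i ≠ j ∧ ∃ h : ℕ,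
      max i.val j.val - min i.val j.val = 2 ^ h) :
    ¬ ∃ a b c d : Fin n, a < b ∧ b < c ∧ c < d ∧ G.Adj a d ∧ G.Adj a c ∧ G.Adj b d := by
  rintro ⟨a, b, c, d, hab, hbc, hcd, had, hac, hbd⟩
  rw [hG] at had hac hbd
  obtain ⟨-, h, hh⟩ := had
  obtain ⟨-, i, hi⟩ := hac
  obtain ⟨-, j, hj⟩ := hbd
  have hab' : a.val < b.val := hab
  have hbc' : b.val < c.val := hbc
  have hcd' : c.val < d.val := hcd
  rw [Nat.max_eq_right (by omega), Nat.min_eq_left (by omega)] at hh hi hj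
  have h1 : 2 ^ i < 2 ^ h := by omega
  have h2 : 2 ^ j < 2 ^ h := by omega
  have hih : i < h := (Nat.pow_lt_pow_iff_right (by norm_num)).mp h1
  have hjh : j < h := (Nat.pow_lt_pow_iff_right (by norm_num)).mp h2
  have e1 : 2 ^ i ≤ 2 ^ (h - 1) := Nat.pow_le_pow_right (by norm_num) (by omega)
  have e2 : 2 ^ j ≤ 2 ^ (h - 1) := Nat.pow_le_pow_right (by norm_num) (by omega)
  have e3 : 2 ^ (h - 1) + 2 ^ (h - 1) = 2 ^ h := by
    rw [← two_mul, ← pow_succ']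
    congr 1
    omega
  omega
end

section
/- Let $T$ be an increasing ordered tree with $k$ edges. Then for all $n\ge k+1$, ${\rm ex}_\rightarrow(n,T) = (k-1)n - \binom{k}{2}$. -/
/-- Vertex set of an ordered-graph pattern given by its edge set. -/
def verts (E : Finset (ℕ × ℕ)) : Finset ℕ := E.image Prod.fst ∪ E.image Prod.snd

/-- An increasing (ordered) tree with its current longest edge (i,j). -/
inductive IncTree : Finset (ℕ × ℕ) → ℕ → ℕ → Prop
  | single (i j : ℕ) : i < j → IncTree {(i, j)} i j
  | right (E : Finset (ℕ × ℕ)) (i j j' : ℕ) :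
      IncTree E i j → j < j' → IncTree (insert (i, j') E) i j'
  | left (E : Finset (ℕ × ℕ)) (i j i' : ℕ) :
      IncTree E i j → i' < i → IncTree (insert (i', j) E) i' j

/-- An n-vertex ordered graph G contains the ordered pattern E if there is an
order-preserving injection of the pattern's vertices mapping edges to edges. -/
def OContains {n : ℕ} (G : SimpleGraph (Fin n)) (E : Finset (ℕ × ℕ)) : Prop :=
  ∃ f : ℕ → Fin n, (∀ a ∈ verts E, ∀ b ∈ verts E, a < b → f a < f b) ∧
    ∀ p ∈ E, G.Adj (f p.1) (f p.2)

/-!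
The upper bound is proved along the construction of the increasing tree. Suppose `T'` arises
from `T` (with `c` edges and longest edge `ij`) by a new leaf edge `ij'` with `j' > j`, and `G`
is `T'`-free. For every vertex `x < n - c` delete the edge from `x` to its largest neighbour.
The rest is `T`-free: a copy `f` of `T` spans `c + 1` vertices in `[f i, f j]`, so `f i < n - c`,
and since the edge `f i f j` survived, `f i` has a neighbour beyond `f j`, which extends the copy
to one of `T'`. At most `n - c` edges are deleted, exactly the increment of the bound from `c`
to `c + 1` edges. Left leaves are symmetric, using smallest neighbours of vertices `x ≥ c`.

For the lower bound, join every two vertices at distance less than `k`: a copy of `T` would have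
a longest edge spanning all of its `k + 1` vertices.
-/

open Finset

section Verts

variable {E : Finset (ℕ × ℕ)}

lemma fst_mem_verts {p : ℕ × ℕ} (h : p ∈ E) : p.1 ∈ verts E :=
  mem_union_left _ (mem_image_of_mem _ h)

lemma snd_mem_verts {p : ℕ × ℕ} (h : p ∈ E) : p.2 ∈ verts E :=
  mem_union_right _ (mem_image_of_mem _ h)

lemma verts_insert (a b : ℕ) (E : Finset (ℕ × ℕ)) :
    verts (insert (a, b) E) = insert a (insert b (verts E)) := by
  rw [verts, verts, image_insert, image_insert, insert_union, union_insert]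

lemma verts_insert_of_fst_mem {a b : ℕ} (ha : a ∈ verts E) :
    verts (insert (a, b) E) = insert b (verts E) := by
  rw [verts_insert, insert_eq_of_mem (mem_insert_of_mem ha)]

lemma verts_insert_of_snd_mem {a b : ℕ} (hb : b ∈ verts E) :
    verts (insert (a, b) E) = insert a (verts E) := by
  rw [verts_insert, insert_eq_of_mem hb]

end Verts

lemma StrictMonoOn.update_insert {α β : Type*} [Preorder α] [DecidableEq α] [Preorder β]
    {f : α → β} {s : Set α} (hf : StrictMonoOn f s) {w : α} (hw : w ∉ s) {v : β}
    (hlt : ∀ x ∈ s, x < w → f x < v) (hgt : ∀ x ∈ s, w < x → v < f x) :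
    StrictMonoOn (Function.update f w v) (insert w s) := by
  have hne : ∀ x ∈ s, x ≠ w := fun x hx h => hw (h ▸ hx)
  rintro x (rfl | hx) y (rfl | hy) hxy
  · exact absurd hxy (lt_irrefl _)
  · simpa [Function.update_of_ne (hne y hy)] using hgt y hy hxy
  · simpa [Function.update_of_ne (hne x hx)] using hlt x hx hxy
  · simpa [Function.update_of_ne (hne x hx), Function.update_of_ne (hne y hy)] using hf hx hy hxy

section OContains

variable {n : ℕ} {G : SimpleGraph (Fin n)} {E : Finset (ℕ × ℕ)}

lemma oContains_insert {f : ℕ → Fin n} (hf : StrictMonoOn f (verts E))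
    (hE : ∀ p ∈ E, G.Adj (f p.1) (f p.2)) {w : ℕ} (hw : w ∉ verts E) {v : Fin n}
    (hlt : ∀ x ∈ verts E, x < w → f x < v) (hgt : ∀ x ∈ verts E, w < x → v < f x)
    {p : ℕ × ℕ} (hp : verts (insert p E) = insert w (verts E))
    (hadj : G.Adj (Function.update f w v p.1) (Function.update f w v p.2)) :
    OContains G (insert p E) := by
  have hne : ∀ x ∈ verts E, x ≠ w := fun x hx h => hw (h ▸ hx)
  refine ⟨Function.update f w v, ?_, ?_⟩
  · rw [hp]
    exact_mod_cast hf.update_insert hw hlt hgt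
  · rintro q hq
    obtain rfl | hq := mem_insert.1 hq
    · exact hadj
    · rw [Function.update_of_ne (hne _ (fst_mem_verts hq)),
        Function.update_of_ne (hne _ (snd_mem_verts hq))]
      exact hE q hq

lemma oContains_insert_of_lt {f : ℕ → Fin n} (hf : StrictMonoOn f (verts E))
    (hE : ∀ p ∈ E, G.Adj (f p.1) (f p.2)) {a w : ℕ} (ha : a ∈ verts E)
    (hw : ∀ x ∈ verts E, x < w) {v : Fin n} (hv : ∀ x ∈ verts E, f x < v)
    (hadj : G.Adj (f a) v) : OContains G (insert (a, w) E) := by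
  have hwE : w ∉ verts E := fun h => lt_irrefl w (hw w h)
  refine oContains_insert hf hE hwE (fun x hx _ => hv x hx)
    (fun x hx h => absurd (hw x hx) h.not_gt) (verts_insert_of_fst_mem ha) ?_
  simpa [Function.update_of_ne (ne_of_lt (hw a ha))] using hadj

lemma oContains_insert_of_gt {f : ℕ → Fin n} (hf : StrictMonoOn f (verts E))
    (hE : ∀ p ∈ E, G.Adj (f p.1) (f p.2)) {w b : ℕ} (hb : b ∈ verts E)
    (hw : ∀ x ∈ verts E, w < x) {v : Fin n} (hv : ∀ x ∈ verts E, v < f x)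
    (hadj : G.Adj v (f b)) : OContains G (insert (w, b) E) := by
  have hwE : w ∉ verts E := fun h => lt_irrefl w (hw w h)
  refine oContains_insert hf hE hwE (fun x hx h => absurd (hw x hx) h.not_gt)
    (fun x hx _ => hv x hx) (verts_insert_of_snd_mem hb) ?_
  simpa [Function.update_of_ne (ne_of_gt (hw b hb))] using hadj

lemma eq_bot_of_not_oContains_singleton {p q : ℕ} (hpq : p < q)
    (hG : ¬ OContains G {(p, q)}) : G = ⊥ := by
  ext a b
  simp only [SimpleGraph.bot_adj, iff_false]
  intro hab
  wlog h : a < b generalizing a b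
  · exact this b a hab.symm (lt_of_le_of_ne (not_lt.1 h) hab.ne.symm)
  refine hG ⟨fun x => if x = p then a else b, ?_, by simpa [hpq.ne'] using hab⟩
  have hv : verts {(p, q)} = {p, q} := by simp [verts]
  rw [hv]
  intro x hx y hy hxy
  simp only [mem_insert, mem_singleton] at hx hy
  rcases hx with rfl | rfl <;> rcases hy with rfl | rfl <;> simp_all [hpq.ne']
  omega

end OContains

section Graph

variable {V : Type*}

lemma SimpleGraph.exists_max_neighbor [LinearOrder V] [Finite V] (G : SimpleGraph V) :
    ∃ m : V → V, ∀ x y, G.Adj x y → G.Adj x (m x) ∧ y ≤ m x := by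
  have (x : V) : ∃ m, ∀ y, G.Adj x y → G.Adj x m ∧ y ≤ m := by
    by_cases h : ∃ y, G.Adj x y
    · obtain ⟨m, hm, hmax⟩ := Set.exists_max_image {y | G.Adj x y} id (Set.toFinite _) h
      exact ⟨m, fun y hy => ⟨hm, hmax y hy⟩⟩
    · exact ⟨x, fun y hy => absurd ⟨y, hy⟩ h⟩
  choose m hm using this
  exact ⟨m, hm⟩

lemma SimpleGraph.exists_min_neighbor [LinearOrder V] [Finite V] (G : SimpleGraph V) :
    ∃ m : V → V, ∀ x y, G.Adj x y → G.Adj x (m x) ∧ m x ≤ y :=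
  exists_max_neighbor (V := Vᵒᵈ) G

lemma SimpleGraph.ncard_edgeSet_le_deleteEdges_add (G : SimpleGraph V) (D : Finset (Sym2 V)) :
    G.edgeSet.ncard ≤ (G.deleteEdges D).edgeSet.ncard + D.card := by
  rw [SimpleGraph.edgeSet_deleteEdges, ← Set.ncard_coe_finset D]
  exact Set.ncard_le_ncard_sdiff_add_ncard _ _ D.finite_toSet

lemma SimpleGraph.ncard_edgeSet_fromRel [LinearOrder V] [Fintype V] {r : V → V → Prop}
    [DecidableRel r] (hr : ∀ x y, r x y → x < y) :
    (SimpleGraph.fromRel r).edgeSet.ncard = #{p : V × V | r p.1 p.2} := by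
  have hE : (SimpleGraph.fromRel r).edgeSet =
      (fun p : V × V => s(p.1, p.2)) '' {p | r p.1 p.2} := by
    ext e
    induction e using Sym2.ind with
    | _ a b =>
      simp only [SimpleGraph.mem_edgeSet, SimpleGraph.fromRel_adj, Set.mem_image,
        Set.mem_ofPred_eq, Prod.exists, Sym2.eq_iff]
      constructor
      · rintro ⟨-, hab | hba⟩
        · exact ⟨a, b, hab, Or.inl ⟨rfl, rfl⟩⟩
        · exact ⟨b, a, hba, Or.inr ⟨rfl, rfl⟩⟩
      · rintro ⟨c, d, hcd, ⟨rfl, rfl⟩ | ⟨rfl, rfl⟩⟩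
        · exact ⟨(hr _ _ hcd).ne, Or.inl hcd⟩
        · exact ⟨(hr _ _ hcd).ne', Or.inr hcd⟩
  have hinj : Set.InjOn (fun p : V × V => s(p.1, p.2)) {p | r p.1 p.2} := by
    rintro ⟨a, b⟩ hab ⟨c, d⟩ hcd h
    obtain ⟨rfl, rfl⟩ | ⟨rfl, rfl⟩ := Sym2.eq_iff.1 h
    · rfl
    · exact absurd (hr _ _ hab) (hr _ _ hcd).not_gt
  rw [hE, hinj.ncard_image, ← Set.ncard_coe_finset, coe_filter]
  simp

end Graph

lemma Fin.card_filter_le_val (n c : ℕ) : #{x : Fin n | c ≤ (x : ℕ)} = n - c := by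
  have h := card_filter_add_card_filter_not (s := (univ : Finset (Fin n)))
    (fun x : Fin n => (x : ℕ) < c)
  simp only [Fin.card_filter_val_lt, card_univ, Fintype.card_fin, not_lt] at h
  omega

def exBound (k n : ℕ) : ℕ := (k - 1) * n - k.choose 2

lemma exBound_one (n : ℕ) : exBound 1 n = 0 := by
  simp [exBound]

lemma exBound_succ {k n : ℕ} (hk : 1 ≤ k) (hkn : k ≤ n) :
    exBound (k + 1) n = exBound k n + (n - k) := by
  have hchoose : (k + 1).choose 2 = k.choose 2 + k := by
    rw [Nat.choose_succ_succ', Nat.choose_one_right, add_comm]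
  have hle : k.choose 2 ≤ (k - 1) * n :=
    calc k.choose 2 ≤ k * (k - 1) := by rw [Nat.choose_two_right]; exact Nat.div_le_self _ _
      _ ≤ (k - 1) * n := by rw [mul_comm]; exact Nat.mul_le_mul_left _ hkn
  obtain ⟨c, rfl⟩ := Nat.exists_eq_add_of_le' hk
  simp only [exBound, hchoose, Nat.add_sub_cancel, add_mul, one_mul] at hle ⊢
  omega

namespace IncTree

variable {E : Finset (ℕ × ℕ)} {i j : ℕ}

lemma self_mem (h : IncTree E i j) : (i, j) ∈ E := by
  cases h <;> simp

lemma lt (h : IncTree E i j) : i < j := by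
  induction h with
  | single _ _ h => exact h
  | right _ _ _ _ _ h ih => exact ih.trans h
  | left _ _ _ _ _ h ih => exact h.trans ih

lemma verts_subset_Icc (h : IncTree E i j) : verts E ⊆ Icc i j := by
  induction h with
  | single i j h =>
    simp [verts, insert_subset_iff, h.le]
  | right E i j j' hT h ih =>
    rw [verts_insert, insert_subset_iff, insert_subset_iff]
    exact ⟨by simp [(hT.lt.trans h).le], by simp [(hT.lt.trans h).le],
      ih.trans (Icc_subset_Icc le_rfl h.le)⟩
  | left E i j i' hT h ih =>
    rw [verts_insert, insert_subset_iff, insert_subset_iff]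
    exact ⟨by simp [(h.trans hT.lt).le], by simp [(h.trans hT.lt).le],
      ih.trans (Icc_subset_Icc h.le le_rfl)⟩

lemma notMem_verts_of_lt (h : IncTree E i j) {b : ℕ} (hb : j < b) : b ∉ verts E :=
  fun hv => by have := mem_Icc.1 (h.verts_subset_Icc hv); omega

lemma notMem_verts_of_gt (h : IncTree E i j) {a : ℕ} (ha : a < i) : a ∉ verts E :=
  fun hv => by have := mem_Icc.1 (h.verts_subset_Icc hv); omega

lemma card_insert_right (h : IncTree E i j) {j' : ℕ} (hj : j < j') :
    (insert (i, j') E).card = E.card + 1 :=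
  card_insert_of_notMem fun hE => h.notMem_verts_of_lt hj (snd_mem_verts hE)

lemma card_insert_left (h : IncTree E i j) {i' : ℕ} (hi : i' < i) :
    (insert (i', j) E).card = E.card + 1 :=
  card_insert_of_notMem fun hE => h.notMem_verts_of_gt hi (fst_mem_verts hE)

lemma card_verts (h : IncTree E i j) : (verts E).card = E.card + 1 := by
  induction h with
  | single i j h => simp [verts, h.ne]
  | right E i j j' hT h ih =>
    rw [verts_insert_of_fst_mem (fst_mem_verts hT.self_mem),
      card_insert_of_notMem (hT.notMem_verts_of_lt h), ih, hT.card_insert_right h]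
  | left E i j i' hT h ih =>
    rw [verts_insert_of_snd_mem (snd_mem_verts hT.self_mem),
      card_insert_of_notMem (hT.notMem_verts_of_gt h), ih, hT.card_insert_left h]

lemma card_pos (h : IncTree E i j) : 0 < E.card :=
  Finset.card_pos.2 ⟨_, h.self_mem⟩

lemma add_card_le {n : ℕ} (h : IncTree E i j) {f : ℕ → Fin n}
    (hf : StrictMonoOn f (verts E)) : (f i : ℕ) + E.card ≤ f j := by
  have hi := fst_mem_verts h.self_mem
  have hj := snd_mem_verts h.self_mem
  have hsub : (verts E).image f ⊆ Icc (f i) (f j) := by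
    intro x hx
    obtain ⟨a, ha, rfl⟩ := mem_image.1 hx
    obtain ⟨hia, haj⟩ := mem_Icc.1 (h.verts_subset_Icc ha)
    exact mem_Icc.2 ⟨hf.monotoneOn hi ha hia, hf.monotoneOn ha hj haj⟩
  have hcard := card_le_card hsub
  rw [card_image_of_injOn hf.injOn, h.card_verts, Fin.card_Icc] at hcard
  omega

variable {n : ℕ} {G : SimpleGraph (Fin n)}

lemma not_oContains_deleteEdges_right (hT : IncTree E i j) {j' : ℕ} (hj : j < j')
    (hG : ¬ OContains G (insert (i, j') E)) {m : Fin n → Fin n}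
    (hm : ∀ x y, G.Adj x y → G.Adj x (m x) ∧ y ≤ m x) :
    ¬ OContains (G.deleteEdges
      (({x | (x : ℕ) < n - E.card} : Finset (Fin n)).image fun x => s(x, m x))) E := by
  rintro ⟨f, hf : StrictMonoOn f (verts E), hE⟩
  have hiV := fst_mem_verts hT.self_mem
  have hjV := snd_mem_verts hT.self_mem
  obtain ⟨hij, hij_kept⟩ := SimpleGraph.deleteEdges_adj.1 (hE _ hT.self_mem)
  dsimp only at hij hij_kept
  obtain ⟨him, hjm⟩ := hm _ _ hij
  have hjm' : f j < m (f i) := by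
    refine hjm.lt_of_ne fun h => hij_kept ?_
    have := hT.add_card_le hf
    have := (f j).isLt
    rw [h]
    exact mem_image_of_mem _ (mem_filter.2 ⟨mem_univ _, by omega⟩)
  refine hG (oContains_insert_of_lt hf (fun p hp => (SimpleGraph.deleteEdges_adj.1 (hE p hp)).1)
    hiV (fun x hx => ?_) (fun x hx => ?_) him)
  · exact (mem_Icc.1 (hT.verts_subset_Icc hx)).2.trans_lt hj
  · exact (hf.monotoneOn hx hjV (mem_Icc.1 (hT.verts_subset_Icc hx)).2).trans_lt hjm'

lemma not_oContains_deleteEdges_left (hT : IncTree E i j) {i' : ℕ} (hi : i' < i)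
    (hG : ¬ OContains G (insert (i', j) E)) {m : Fin n → Fin n}
    (hm : ∀ x y, G.Adj x y → G.Adj x (m x) ∧ m x ≤ y) :
    ¬ OContains (G.deleteEdges
      (({x | E.card ≤ (x : ℕ)} : Finset (Fin n)).image fun x => s(x, m x))) E := by
  rintro ⟨f, hf : StrictMonoOn f (verts E), hE⟩
  have hiV := fst_mem_verts hT.self_mem
  have hjV := snd_mem_verts hT.self_mem
  obtain ⟨hij, hij_kept⟩ := SimpleGraph.deleteEdges_adj.1 (hE _ hT.self_mem)
  dsimp only at hij hij_kept
  obtain ⟨hjm, hmi⟩ := hm _ _ hij.symm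
  have hmi' : m (f j) < f i := by
    refine hmi.lt_of_ne fun h => hij_kept ?_
    have := hT.add_card_le hf
    rw [← h, Sym2.eq_swap]
    exact mem_image_of_mem _ (mem_filter.2 ⟨mem_univ _, by omega⟩)
  refine hG (oContains_insert_of_gt hf (fun p hp => (SimpleGraph.deleteEdges_adj.1 (hE p hp)).1)
    hjV (fun x hx => ?_) (fun x hx => ?_) hjm.symm)
  · exact hi.trans_le (mem_Icc.1 (hT.verts_subset_Icc hx)).1
  · exact hmi'.trans_le (hf.monotoneOn hiV hx (mem_Icc.1 (hT.verts_subset_Icc hx)).1)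

theorem ncard_edgeSet_le (hT : IncTree E i j) (hn : E.card ≤ n) (G : SimpleGraph (Fin n))
    (hG : ¬ OContains G E) : G.edgeSet.ncard ≤ exBound E.card n := by
  induction hT generalizing G with
  | single p q hpq => simp [eq_bot_of_not_oContains_singleton hpq hG]
  | right E i j j' hT hj ih =>
    rw [hT.card_insert_right hj] at hn ⊢
    obtain ⟨m, hm⟩ := G.exists_max_neighbor
    calc G.edgeSet.ncard ≤ _ + _ := G.ncard_edgeSet_le_deleteEdges_add _
      _ ≤ exBound E.card n + (n - E.card) :=
        add_le_add (ih (by omega) _ (hT.not_oContains_deleteEdges_right hj hG hm))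
          (card_image_le.trans (Fin.card_filter_val_lt.trans_le (min_le_right _ _)))
      _ = exBound (E.card + 1) n := (exBound_succ hT.card_pos (by omega)).symm
  | left E i j i' hT hi ih =>
    rw [hT.card_insert_left hi] at hn ⊢
    obtain ⟨m, hm⟩ := G.exists_min_neighbor
    calc G.edgeSet.ncard ≤ _ + _ := G.ncard_edgeSet_le_deleteEdges_add _
      _ ≤ exBound E.card n + (n - E.card) :=
        add_le_add (ih (by omega) _ (hT.not_oContains_deleteEdges_left hi hG hm))
          (card_image_le.trans (Fin.card_filter_le_val n _).le)
      _ = exBound (E.card + 1) n := (exBound_succ hT.card_pos (by omega)).symm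

end IncTree

def shortEdgeGraph (n k : ℕ) : SimpleGraph (Fin n) :=
  SimpleGraph.fromRel fun x y => x < y ∧ (y : ℕ) < x + k

lemma IncTree.not_oContains_shortEdgeGraph {E : Finset (ℕ × ℕ)} {i j n : ℕ}
    (hT : IncTree E i j) : ¬ OContains (shortEdgeGraph n E.card) E := by
  rintro ⟨f, hf : StrictMonoOn f (verts E), hE⟩
  have hspan := hT.add_card_le hf
  have hij := hE _ hT.self_mem
  simp only [shortEdgeGraph, SimpleGraph.fromRel_adj, Fin.lt_def] at hij
  omega

lemma card_filter_snd_eq_fst_add (n d : ℕ) :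
    #{p : Fin n × Fin n | (p.2 : ℕ) = p.1 + d} = n - d := by
  rw [← card_range (n - d)]
  refine card_bij (fun p _ => (p.1 : ℕ)) (fun p hp => ?_) (fun p hp q hq h => ?_) (fun a ha => ?_)
  · simp only [mem_filter, mem_univ, true_and] at hp
    simp only [mem_range]
    omega
  · simp only [mem_filter, mem_univ, true_and] at hp hq
    ext <;> simp only [Fin.val_inj] at h ⊢ <;> omega
  · simp only [mem_range] at ha
    exact ⟨(⟨a, by omega⟩, ⟨a + d, by omega⟩), by simp, rfl⟩

lemma card_filter_lt_lt_add {n k : ℕ} (hk : 1 ≤ k) (hkn : k ≤ n) :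
    #{p : Fin n × Fin n | p.1 < p.2 ∧ (p.2 : ℕ) < p.1 + k} = exBound k n := by
  induction k, hk using Nat.le_induction with
  | base =>
    rw [exBound_one, card_eq_zero, filter_eq_empty_iff]
    intro p _
    simp only [Fin.lt_def]
    omega
  | succ k hk ih =>
    have hsplit : #{p : Fin n × Fin n | p.1 < p.2 ∧ (p.2 : ℕ) < p.1 + (k + 1)} =
        #{p : Fin n × Fin n | p.1 < p.2 ∧ (p.2 : ℕ) < p.1 + k} +
          #{p : Fin n × Fin n | (p.2 : ℕ) = p.1 + k} := by
      rw [← card_union_of_disjoint, ← filter_or]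
      · congr 1
        ext p
        simp only [mem_filter, mem_univ, true_and, Fin.lt_def]
        omega
      · rw [disjoint_filter]
        intro p _ h
        omega
    rw [hsplit, ih (by omega), card_filter_snd_eq_fst_add, exBound_succ hk (by omega)]

lemma ncard_edgeSet_shortEdgeGraph {n k : ℕ} (hk : 1 ≤ k) (hkn : k ≤ n) :
    (shortEdgeGraph n k).edgeSet.ncard = exBound k n := by
  rw [shortEdgeGraph, SimpleGraph.ncard_edgeSet_fromRel fun _ _ h => h.1,
    card_filter_lt_lt_add hk hkn]

/-- For an increasing tree T with k edges and n ≥ k+1,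
ex→(n,T) = (k-1)n - C(k,2). -/
theorem stmt_6 (k n : ℕ) (E : Finset (ℕ × ℕ)) (i j : ℕ)
    (hT : IncTree E i j) (hk : E.card = k) (hn : k + 1 ≤ n) :
    (∀ G : SimpleGraph (Fin n), ¬ OContains G E →
        G.edgeSet.ncard ≤ (k - 1) * n - k.choose 2) ∧
    (∃ G : SimpleGraph (Fin n), ¬ OContains G E ∧
        G.edgeSet.ncard = (k - 1) * n - k.choose 2) := by
  subst hk
  exact ⟨fun G hG => hT.ncard_edgeSet_le (by omega) G hG, shortEdgeGraph n E.card,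
    hT.not_oContains_shortEdgeGraph, ncard_edgeSet_shortEdgeGraph hT.card_pos (by omega)⟩
end

section
/- If $T$ is an ordered tree with interval chromatic number two containing crossing edges $i'j$ and $ij'$ with $i'<i<j<j'$ and $ij\notin E(T)$, then $T$ contains a copy of one of the ordered paths $P$, $Q$, or $R$. -/
/-- The simple graph on ℕ determined by an edge set. -/
def patGraph (E : Finset (ℕ × ℕ)) : SimpleGraph ℕ :=
  SimpleGraph.fromRel (fun a b => (a, b) ∈ E)

/-- `E` is the edge set of an ordered tree (edges written (x,y) with x < y):
it has one more vertex than edges and is connected. -/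
def PatTree (E : Finset (ℕ × ℕ)) : Prop :=
  (∀ p ∈ E, p.1 < p.2) ∧ (verts E).card = E.card + 1 ∧
    ∀ a ∈ verts E, ∀ b ∈ verts E, (patGraph E).Reachable a b

/-- Interval chromatic number two: all edges straddle a common split point. -/
def IntervalChrom2 (E : Finset (ℕ × ℕ)) : Prop :=
  ∃ m : ℕ, ∀ p ∈ E, p.1 ≤ m ∧ m < p.2

/-- `W` is the edge set of a three-edge ordered path. -/
def IsOrderedPath3 (W : Finset (ℕ × ℕ)) : Prop :=
  ∃ w1 w2 w3 w4 : ℕ, [w1, w2, w3, w4].Nodup ∧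
    W = {(min w1 w2, max w1 w2), (min w2 w3, max w2 w3), (min w3 w4, max w3 w4)}

/-- Some two edges of the pattern cross. -/
def HasCrossingPair (W : Finset (ℕ × ℕ)) : Prop :=
  ∃ p ∈ W, ∃ q ∈ W, p.1 < q.1 ∧ q.1 < p.2 ∧ p.2 < q.2

/-- The three forbidden configurations P, Q, R: a three-edge ordered path of interval
chromatic number two containing a crossing pair of edges. -/
def CrossingP3 (W : Finset (ℕ × ℕ)) : Prop :=
  IsOrderedPath3 W ∧ IntervalChrom2 W ∧ HasCrossingPair W

/-- Ordered containment of one pattern in another (order-preserving, edge-preserving). -/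
def PatContains (host pat : Finset (ℕ × ℕ)) : Prop :=
  ∃ f : ℕ → ℕ, (∀ x ∈ verts pat, ∀ y ∈ verts pat, x < y → f x < f y) ∧
    ∀ p ∈ pat, (f p.1, f p.2) ∈ host

/-! ### Auxiliary notions -/

def adjE (E : Finset (ℕ × ℕ)) (a b : ℕ) : Prop := (a, b) ∈ E ∨ (b, a) ∈ E

lemma adjE_symm {E : Finset (ℕ × ℕ)} {a b : ℕ} (h : adjE E a b) : adjE E b a := by
  rcases h with h | h
  exacts [Or.inr h, Or.inl h]

def CrossA (a b c d : ℕ) : Prop :=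
  min a b < min c d ∧ min c d < max a b ∧ max a b < max c d

def CrossE' (a b c d : ℕ) : Prop := CrossA a b c d ∨ CrossA c d a b

lemma sortmem {E : Finset (ℕ × ℕ)} (hE : ∀ p ∈ E, p.1 < p.2) {x y : ℕ}
    (h : adjE E x y) : (min x y, max x y) ∈ E := by
  rcases h with h | h
  · have hxy : x < y := hE _ h
    rwa [min_eq_left hxy.le, max_eq_right hxy.le]
  · have hyx : y < x := hE _ h
    rwa [min_eq_right hyx.le, max_eq_left hyx.le]

lemma build (E : Finset (ℕ × ℕ)) (m : ℕ) (hE : ∀ p ∈ E, p.1 < p.2)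
    (hm : ∀ p ∈ E, p.1 ≤ m ∧ m < p.2) (w1 w2 w3 w4 : ℕ)
    (h12 : (min w1 w2, max w1 w2) ∈ E) (h23 : (min w2 w3, max w2 w3) ∈ E)
    (h34 : (min w3 w4, max w3 w4) ∈ E)
    (hcr : CrossE' w1 w2 w3 w4) :
    ∃ W : Finset (ℕ × ℕ), CrossingP3 W ∧ PatContains E W := by
  have l12 : min w1 w2 < max w1 w2 := hE _ h12
  have l23 : min w2 w3 < max w2 w3 := hE _ h23
  have l34 : min w3 w4 < max w3 w4 := hE _ h34
  refine ⟨{(min w1 w2, max w1 w2), (min w2 w3, max w2 w3), (min w3 w4, max w3 w4)},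
    ⟨⟨w1, w2, w3, w4, ?_, rfl⟩, ?_, ?_⟩, ?_⟩
  · simp
    rcases hcr with ⟨hc1, hc2, hc3⟩ | ⟨hc1, hc2, hc3⟩ <;> omega
  · refine ⟨m, fun p hp => ?_⟩
    have : p ∈ E := by
      rcases Finset.mem_insert.1 hp with h | h
      · exact h ▸ h12
      rcases Finset.mem_insert.1 h with h | h
      · exact h ▸ h23
      · exact (Finset.mem_singleton.1 h) ▸ h34
    exact hm p this
  · rcases hcr with ⟨hc1, hc2, hc3⟩ | ⟨hc1, hc2, hc3⟩
    · exact ⟨(min w1 w2, max w1 w2), by simp, (min w3 w4, max w3 w4), by simp,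
        hc1, hc2, hc3⟩
    · exact ⟨(min w3 w4, max w3 w4), by simp, (min w1 w2, max w1 w2), by simp,
        hc1, hc2, hc3⟩
  · refine ⟨id, fun x _ y _ h => h, fun p hp => ?_⟩
    have hpE : p ∈ E := by
      rcases Finset.mem_insert.1 hp with h | h
      · exact h ▸ h12
      rcases Finset.mem_insert.1 h with h | h
      · exact h ▸ h23
      · exact (Finset.mem_singleton.1 h) ▸ h34
    simpa using hpE

lemma step_small (m A0 A1 B0 B1 x y : ℕ)
    (sA0 : A0 ≤ m) (sA1 : m < A1) (sB0 : B0 ≤ m) (sB1 : m < B1)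
    (hcr : A0 < B0 ∧ B0 < A1 ∧ A1 < B1)
    (hS : min x y ≤ m ∧ m < max x y)
    (hA : ¬ CrossE' A0 A1 x y) (hB : ¬ CrossE' x y B1 B0)
    (ne1 : x ≠ B0) (ne2 : x ≠ B1) (ne3 : x ≠ A0) (ne4 : x ≠ A1)
    (ne5 : y ≠ B0) (ne6 : y ≠ B1) (ne7 : y ≠ A0) (ne8 : y ≠ A1)
    (hprev : B0 ≤ x ∧ x ≤ A1) :
    B0 ≤ y ∧ y ≤ A1 := by
  simp only [CrossE', CrossA] at hA hB
  omega

lemma step_big (m A0 A1 B0 B1 x y : ℕ)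
    (sA0 : A0 ≤ m) (sA1 : m < A1) (sB0 : B0 ≤ m) (sB1 : m < B1)
    (hcr : A0 < B0 ∧ B0 < A1 ∧ A1 < B1)
    (hS : min x y ≤ m ∧ m < max x y)
    (hA : ¬ CrossE' A1 A0 x y) (hB : ¬ CrossE' x y B0 B1)
    (ne1 : x ≠ B0) (ne2 : x ≠ B1) (ne3 : x ≠ A0) (ne4 : x ≠ A1)
    (ne5 : y ≠ B0) (ne6 : y ≠ B1) (ne7 : y ≠ A0) (ne8 : y ≠ A1)
    (hprev : (x ≤ A0 ∨ B1 ≤ x)) :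
    (y ≤ A0 ∨ B1 ≤ y) := by
  simp only [CrossE', CrossA] at hA hB
  omega

lemma base_small (m A0 A1 B0 B1 c : ℕ)
    (sA0 : A0 ≤ m) (sA1 : m < A1) (sB0 : B0 ≤ m) (sB1 : m < B1)
    (hcr : A0 < B0 ∧ B0 < A1 ∧ A1 < B1)
    (hS : min A1 c ≤ m ∧ m < max A1 c)
    (h1 : ¬ CrossE' A1 c B1 B0) (ne1 : c ≠ B0) (ne2 : c ≠ B1) :
    B0 ≤ A1 ∧ A1 ≤ A1 ∧ B0 ≤ c ∧ c ≤ A1 := by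
  simp only [CrossE', CrossA] at h1
  omega

lemma base_big (m A0 A1 B0 B1 c : ℕ)
    (sA0 : A0 ≤ m) (sA1 : m < A1) (sB0 : B0 ≤ m) (sB1 : m < B1)
    (hcr : A0 < B0 ∧ B0 < A1 ∧ A1 < B1)
    (hS : min A0 c ≤ m ∧ m < max A0 c)
    (h1 : ¬ CrossE' A0 c B0 B1) (ne1 : c ≠ B0) (ne2 : c ≠ B1) :
    (A0 ≤ A0 ∨ B1 ≤ A0) ∧ (c ≤ A0 ∨ B1 ≤ c) := by
  simp only [CrossE', CrossA] at h1
  omega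

lemma final_small (m A0 A1 B0 B1 d : ℕ)
    (sA0 : A0 ≤ m) (sA1 : m < A1) (sB0 : B0 ≤ m) (sB1 : m < B1)
    (hcr : A0 < B0 ∧ B0 < A1 ∧ A1 < B1)
    (hS : min d B1 ≤ m ∧ m < max d B1)
    (h2 : ¬ CrossE' A0 A1 d B1) (ne : d ≠ A0)
    (hfin : B0 ≤ d ∧ d ≤ A1) : False := by
  simp only [CrossE', CrossA] at h2
  omega

lemma final_big (m A0 A1 B0 B1 d : ℕ)
    (sA0 : A0 ≤ m) (sA1 : m < A1) (sB0 : B0 ≤ m) (sB1 : m < B1)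
    (hcr : A0 < B0 ∧ B0 < A1 ∧ A1 < B1)
    (hS : min d B0 ≤ m ∧ m < max d B0)
    (h2 : ¬ CrossE' A1 A0 d B0) (ne : d ≠ A1)
    (hfin : d ≤ A0 ∨ B1 ≤ d) : False := by
  simp only [CrossE', CrossA] at h2
  omega

lemma cross_i (m A0 A1 B0 B1 c d : ℕ)
    (sA0 : A0 ≤ m) (sA1 : m < A1) (sB0 : B0 ≤ m) (sB1 : m < B1)
    (hcr : A0 < B0 ∧ B0 < A1 ∧ A1 < B1)
    (hSc : min A1 c ≤ m ∧ m < max A1 c) (hSd : min d B0 ≤ m ∧ m < max d B0)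
    (h1 : ¬ CrossE' A1 c B0 B1) (h2 : ¬ CrossE' A0 A1 d B0)
    (nec : c ≠ B0) (ned : d ≠ A1) : CrossE' A1 c d B0 := by
  have hc : c ≤ m := by omega
  have hd : m < d := by omega
  simp only [CrossE', CrossA] at h1 h2 ⊢
  simp only [min_eq_right (by omega : c ≤ A1), max_eq_left (by omega : c ≤ A1),
    min_eq_left (by omega : B0 ≤ B1), max_eq_right (by omega : B0 ≤ B1),
    min_eq_left (by omega : A0 ≤ A1), max_eq_right (by omega : A0 ≤ A1),
    min_eq_right (by omega : B0 ≤ d), max_eq_left (by omega : B0 ≤ d)] at h1 h2 ⊢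
  omega

lemma cross_iv (m A0 A1 B0 B1 c d : ℕ)
    (sA0 : A0 ≤ m) (sA1 : m < A1) (sB0 : B0 ≤ m) (sB1 : m < B1)
    (hcr : A0 < B0 ∧ B0 < A1 ∧ A1 < B1)
    (hSc : min A0 c ≤ m ∧ m < max A0 c) (hSd : min d B1 ≤ m ∧ m < max d B1)
    (h1 : ¬ CrossE' A0 c B1 B0) (h2 : ¬ CrossE' A1 A0 d B1)
    (nec : c ≠ B1) (ned : d ≠ A0) : CrossE' A0 c d B1 := by
  have hc : m < c := by omega
  have hd : d ≤ m := by omega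
  simp only [CrossE', CrossA] at h1 h2 ⊢
  simp only [min_eq_left (by omega : A0 ≤ c), max_eq_right (by omega : A0 ≤ c),
    min_eq_left (by omega : B0 ≤ B1), max_eq_right (by omega : B0 ≤ B1),
    min_eq_right (by omega : A0 ≤ A1), max_eq_left (by omega : A0 ≤ A1),
    min_eq_left (by omega : d ≤ B1), max_eq_right (by omega : d ≤ B1)] at h1 h2 ⊢
  omega

set_option maxHeartbeats 1000000 in
lemma keyA (E : Finset (ℕ × ℕ)) (m : ℕ) (hE : ∀ p ∈ E, p.1 < p.2)
    (hm : ∀ p ∈ E, p.1 ≤ m ∧ m < p.2) :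
    ∀ g N (u : ℕ → ℕ),
      (∀ r, r < N → adjE E (u r) (u (r+1))) →
      (∀ a b, a ≤ N → b ≤ N → u a = u b → a = b) →
      ∀ s t, s + 2 ≤ t → t < N → t - s ≤ g →
      CrossA (u s) (u (s+1)) (u t) (u (t+1)) →
      ∃ W : Finset (ℕ × ℕ), CrossingP3 W ∧ PatContains E W := by
  intro g
  induction g using Nat.strong_induction_on with
  | _ g IH =>
  intro N u hadj hinj s t hst htN hgap hcr
  have hside : ∀ r, r < N → min (u r) (u (r+1)) ≤ m ∧ m < max (u r) (u (r+1)) :=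
    fun r hr => hm _ (sortmem hE (hadj r hr))
  have hne : ∀ p q : ℕ, p ≤ N → q ≤ N → p ≠ q → u p ≠ u q :=
    fun p q hp hq hpq h => hpq (hinj p q hp hq h)
  have hrecE : ∀ s' t', s' + 2 ≤ t' → t' < N → t' - s' < g →
      CrossE' (u s') (u (s'+1)) (u t') (u (t'+1)) →
      ∃ W : Finset (ℕ × ℕ), CrossingP3 W ∧ PatContains E W := by
    intro s' t' hst' htN' hg' hc
    rcases hc with hA | hB
    · exact IH (t' - s') hg' N u hadj hinj s' t' hst' htN' le_rfl hA
    · refine IH (t' - s') hg' N (fun x => u (N - x)) ?_ ?_ (N - 1 - t') (N - 1 - s')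
        (by omega) (by omega) (by omega) ?_
      · intro r hr
        have h4 : N - r - 1 < N := by omega
        have h5 := hadj (N - r - 1) h4
        rw [show N - r - 1 + 1 = N - r from by omega] at h5
        show adjE E (u (N - r)) (u (N - (r+1)))
        rw [show N - (r+1) = N - r - 1 from by omega]
        exact adjE_symm h5
      · intro a b ha hb h
        have := hinj (N - a) (N - b) (by omega) (by omega) h
        omega
      · show CrossA (u (N - (N - 1 - t'))) (u (N - (N - 1 - t' + 1)))
          (u (N - (N - 1 - s'))) (u (N - (N - 1 - s' + 1)))
        rw [show N - (N - 1 - t') = t' + 1 from by omega,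
          show N - (N - 1 - t' + 1) = t' from by omega,
          show N - (N - 1 - s') = s' + 1 from by omega,
          show N - (N - 1 - s' + 1) = s' from by omega]
        obtain ⟨c1, c2, c3⟩ := hB
        exact ⟨by omega, by omega, by omega⟩
  by_cases hbase : t = s + 2
  · subst hbase
    exact build E m hE hm (u s) (u (s+1)) (u (s+2)) (u (s+3))
      (sortmem hE (hadj s (by omega))) (sortmem hE (hadj (s+1) (by omega)))
      (sortmem hE (hadj (s+2) htN)) (Or.inl hcr)
  have ht3 : s + 3 ≤ t := by omega
  have et : t - 1 + 1 = t := by omega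
  by_cases h1 : CrossE' (u (s+1)) (u (s+2)) (u t) (u (t+1))
  · exact hrecE (s+1) t (by omega) htN (by omega) h1
  by_cases h2 : CrossE' (u s) (u (s+1)) (u (t-1)) (u t)
  · refine hrecE s (t-1) (by omega) (by omega) (by omega) ?_
    rw [et]; exact h2
  by_cases h3 : CrossE' (u (s+1)) (u (s+2)) (u (t-1)) (u t)
  · rcases Nat.lt_or_ge (s+3) t with h4 | h4
    · refine hrecE (s+1) (t-1) (by omega) (by omega) (by omega) ?_
      rw [et]; exact h3
    · exfalso
      rw [show t - 1 = s + 2 from by omega] at h3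
      simp only [CrossE', CrossA] at h3
      omega
  by_cases hmidc : ∃ r, (s+2 ≤ r ∧ r < t ∧ CrossE' (u s) (u (s+1)) (u r) (u (r+1))) ∨
      (s+1 ≤ r ∧ r+2 ≤ t ∧ CrossE' (u r) (u (r+1)) (u t) (u (t+1)))
  · obtain ⟨r, hr | hr⟩ := hmidc
    · exact hrecE s r (by omega) (by omega) (by omega) hr.2.2
    · exact hrecE r t (by omega) htN (by omega) hr.2.2
  push_neg at hmidc
  have hSs := hside s (by omega)
  have hSs1 := hside (s+1) (by omega)
  rw [show s+1+1 = s+2 from rfl] at hSs1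
  have hSt := hside t htN
  have hSt1 := hside (t-1) (by omega)
  rw [et] at hSt1
  have n10 := hne (s+2) t (by omega) (by omega) (by omega)
  have n11 := hne (s+2) (t+1) (by omega) (by omega) (by omega)
  have hcr' : min (u s) (u (s+1)) < min (u t) (u (t+1)) ∧
      min (u t) (u (t+1)) < max (u s) (u (s+1)) ∧
      max (u s) (u (s+1)) < max (u t) (u (t+1)) := hcr
  rcases le_or_gt (u (s+1)) m with hs1m | hs1m <;> rcases le_or_gt (u t) m with htm | htm
  · -- case (iii) big chain : A0 = u (s+1), A1 = u s, B0 = u t, B1 = u (t+1)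
    have l1 : m < u s := by omega
    have l2 : m < u (t+1) := by omega
    have hcrL : u (s+1) < u t ∧ u t < u s ∧ u s < u (t+1) := by omega
    clear hcr hcr' hSs hSt
    have hbig : ∀ r, s+1 ≤ r → r ≤ t-2 →
        ((u r ≤ u (s+1) ∨ u (t+1) ≤ u r) ∧ (u (r+1) ≤ u (s+1) ∨ u (t+1) ≤ u (r+1))) := by
      intro r hr1
      induction r, hr1 using Nat.le_induction with
      | base =>
        intro _
        rw [show s+1+1 = s+2 from rfl]
        exact base_big m (u (s+1)) (u s) (u t) (u (t+1)) (u (s+2))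
          hs1m l1 htm l2 hcrL hSs1 h1 n10 n11
      | succ r hr IHr =>
        intro hr2
        have hprev := IHr (by omega)
        have hSr := hside (r+1) (by omega)
        rw [show r+1+1 = r+2 from rfl] at hSr
        have hA := (hmidc (r+1)).1 (by omega) (by omega)
        have hB := (hmidc (r+1)).2 (by omega) (by omega)
        rw [show r+1+1 = r+2 from rfl] at hA hB
        refine ⟨hprev.2, ?_⟩
        rw [show r+1+1 = r+2 from rfl]
        exact step_big m (u (s+1)) (u s) (u t) (u (t+1)) (u (r+1)) (u (r+2))
          hs1m l1 htm l2 hcrL hSr hA hB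
          (hne (r+1) t (by omega) (by omega) (by omega))
          (hne (r+1) (t+1) (by omega) (by omega) (by omega))
          (hne (r+1) (s+1) (by omega) (by omega) (by omega))
          (hne (r+1) s (by omega) (by omega) (by omega))
          (hne (r+2) t (by omega) (by omega) (by omega))
          (hne (r+2) (t+1) (by omega) (by omega) (by omega))
          (hne (r+2) (s+1) (by omega) (by omega) (by omega))
          (hne (r+2) s (by omega) (by omega) (by omega))
          hprev.2
    have hfin := hbig (t-2) (by omega) le_rfl
    rw [show t-2+1 = t-1 from by omega] at hfin
    exact (final_big m (u (s+1)) (u s) (u t) (u (t+1)) (u (t-1))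
      hs1m l1 htm l2 hcrL hSt1 h2
      (hne (t-1) s (by omega) (by omega) (by omega)) hfin.2).elim
  · -- case (iv) : A0 = u (s+1), A1 = u s, B0 = u (t+1), B1 = u t
    have l1 : m < u s := by omega
    have l2 : u (t+1) ≤ m := by omega
    have hcrL : u (s+1) < u (t+1) ∧ u (t+1) < u s ∧ u s < u t := by omega
    exact absurd (cross_iv m (u (s+1)) (u s) (u (t+1)) (u t) (u (s+2)) (u (t-1))
      hs1m l1 l2 htm hcrL hSs1 hSt1 h1 h2 n10
      (hne (t-1) (s+1) (by omega) (by omega) (by omega))) h3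
  · -- case (i) : A0 = u s, A1 = u (s+1), B0 = u t, B1 = u (t+1)
    have l1 : u s ≤ m := by omega
    have l2 : m < u (t+1) := by omega
    have hcrL : u s < u t ∧ u t < u (s+1) ∧ u (s+1) < u (t+1) := by omega
    exact absurd (cross_i m (u s) (u (s+1)) (u t) (u (t+1)) (u (s+2)) (u (t-1))
      l1 hs1m htm l2 hcrL hSs1 hSt1 h1 h2 n10
      (hne (t-1) (s+1) (by omega) (by omega) (by omega))) h3
  · -- case (ii) small chain : A0 = u s, A1 = u (s+1), B0 = u (t+1), B1 = u t
    have l1 : u s ≤ m := by omega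
    have l2 : u (t+1) ≤ m := by omega
    have hcrL : u s < u (t+1) ∧ u (t+1) < u (s+1) ∧ u (s+1) < u t := by omega
    clear hcr hcr' hSs hSt
    have hsmall : ∀ r, s+1 ≤ r → r ≤ t-2 →
        (u (t+1) ≤ u r ∧ u r ≤ u (s+1) ∧ u (t+1) ≤ u (r+1) ∧ u (r+1) ≤ u (s+1)) := by
      intro r hr1
      induction r, hr1 using Nat.le_induction with
      | base =>
        intro _
        rw [show s+1+1 = s+2 from rfl]
        exact base_small m (u s) (u (s+1)) (u (t+1)) (u t) (u (s+2))
          l1 hs1m l2 htm hcrL hSs1 h1 n11 n10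
      | succ r hr IHr =>
        intro hr2
        have hprev := IHr (by omega)
        have hSr := hside (r+1) (by omega)
        rw [show r+1+1 = r+2 from rfl] at hSr
        have hA := (hmidc (r+1)).1 (by omega) (by omega)
        have hB := (hmidc (r+1)).2 (by omega) (by omega)
        rw [show r+1+1 = r+2 from rfl] at hA hB
        have hstep := step_small m (u s) (u (s+1)) (u (t+1)) (u t) (u (r+1)) (u (r+2))
          l1 hs1m l2 htm hcrL hSr hA hB
          (hne (r+1) (t+1) (by omega) (by omega) (by omega))
          (hne (r+1) t (by omega) (by omega) (by omega))
          (hne (r+1) s (by omega) (by omega) (by omega))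
          (hne (r+1) (s+1) (by omega) (by omega) (by omega))
          (hne (r+2) (t+1) (by omega) (by omega) (by omega))
          (hne (r+2) t (by omega) (by omega) (by omega))
          (hne (r+2) s (by omega) (by omega) (by omega))
          (hne (r+2) (s+1) (by omega) (by omega) (by omega))
          ⟨hprev.2.2.1, hprev.2.2.2⟩
        rw [show r+1+1 = r+2 from rfl]
        exact ⟨hprev.2.2.1, hprev.2.2.2, hstep.1, hstep.2⟩
    have hfin := hsmall (t-2) (by omega) le_rfl
    rw [show t-2+1 = t-1 from by omega] at hfin
    exact (final_small m (u s) (u (s+1)) (u (t+1)) (u t) (u (t-1))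
      l1 hs1m l2 htm hcrL hSt1 h2
      (hne (t-1) s (by omega) (by omega) (by omega)) ⟨hfin.2.2.1, hfin.2.2.2⟩).elim

lemma keyE (E : Finset (ℕ × ℕ)) (m : ℕ) (hE : ∀ p ∈ E, p.1 < p.2)
    (hm : ∀ p ∈ E, p.1 ≤ m ∧ m < p.2) (N : ℕ) (u : ℕ → ℕ)
    (hadj : ∀ r, r < N → adjE E (u r) (u (r+1)))
    (hinj : ∀ a b, a ≤ N → b ≤ N → u a = u b → a = b)
    (s t : ℕ) (hst : s + 2 ≤ t) (htN : t < N)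
    (hcr : CrossE' (u s) (u (s+1)) (u t) (u (t+1))) :
    ∃ W : Finset (ℕ × ℕ), CrossingP3 W ∧ PatContains E W := by
  rcases hcr with hA | hB
  · exact keyA E m hE hm (t-s) N u hadj hinj s t hst htN le_rfl hA
  · refine keyA E m hE hm (t-s) N (fun x => u (N - x)) ?_ ?_ (N - 1 - t) (N - 1 - s)
      (by omega) (by omega) (by omega) ?_
    · intro r hr
      have h4 : N - r - 1 < N := by omega
      have h5 := hadj (N - r - 1) h4
      rw [show N - r - 1 + 1 = N - r from by omega] at h5
      show adjE E (u (N - r)) (u (N - (r+1)))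
      rw [show N - (r+1) = N - r - 1 from by omega]
      exact adjE_symm h5
    · intro a b ha hb h
      have := hinj (N - a) (N - b) (by omega) (by omega) h
      omega
    · show CrossA (u (N - (N - 1 - t))) (u (N - (N - 1 - t + 1)))
        (u (N - (N - 1 - s))) (u (N - (N - 1 - s + 1)))
      rw [show N - (N - 1 - t) = t + 1 from by omega,
        show N - (N - 1 - t + 1) = t from by omega,
        show N - (N - 1 - s) = s + 1 from by omega,
        show N - (N - 1 - s + 1) = s from by omega]
      obtain ⟨c1, c2, c3⟩ := hB
      exact ⟨by omega, by omega, by omega⟩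

lemma extend2 (E : Finset (ℕ × ℕ)) (m : ℕ) (hE : ∀ p ∈ E, p.1 < p.2)
    (hm : ∀ p ∈ E, p.1 ≤ m ∧ m < p.2) (M : ℕ) (hM : 1 ≤ M) (w : ℕ → ℕ)
    (hadjw : ∀ k, k < M → adjE E (w k) (w (k+1)))
    (hinjw : ∀ a b, a ≤ M → b ≤ M → w a = w b → a = b)
    (p q : ℕ) (hp : adjE E p (w 0)) (hq : adjE E (w M) q)
    (hpw : ∀ k, k ≤ M → w k ≠ p) (hqw : ∀ k, k ≤ M → w k ≠ q) (hpq : p ≠ q)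
    (hcr : CrossE' p (w 0) (w M) q) :
    ∃ W : Finset (ℕ × ℕ), CrossingP3 W ∧ PatContains E W := by
  set u : ℕ → ℕ := fun k => if k = 0 then p else if k = M + 2 then q else w (k - 1) with hu
  have hval : ∀ k : ℕ, (k = 0 ∧ u k = p) ∨ (k = M + 2 ∧ u k = q) ∨
      (1 ≤ k ∧ k ≠ M + 2 ∧ u k = w (k-1)) := by
    intro k
    by_cases hk0 : k = 0
    · exact Or.inl ⟨hk0, by simp [hu, hk0]⟩
    by_cases hkM : k = M + 2
    · exact Or.inr (Or.inl ⟨hkM, by simp [hu, hkM]⟩)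
    · exact Or.inr (Or.inr ⟨by omega, hkM, by simp [hu, hk0, hkM]⟩)
  have e1 : u 0 = p := by
    rcases hval 0 with ⟨_, hv⟩ | ⟨e, _⟩ | ⟨e, _, _⟩
    · exact hv
    · omega
    · omega
  have e2 : u 1 = w 0 := by
    rcases hval 1 with ⟨e, _⟩ | ⟨e, _⟩ | ⟨_, _, hv⟩
    · omega
    · omega
    · exact hv
  have e3 : u (M+1) = w M := by
    rcases hval (M+1) with ⟨e, _⟩ | ⟨e, _⟩ | ⟨_, _, hv⟩
    · omega
    · omega
    · exact hv
  have e4 : u (M+2) = q := by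
    rcases hval (M+2) with ⟨e, _⟩ | ⟨_, hv⟩ | ⟨_, e, _⟩
    · omega
    · exact hv
    · omega
  refine keyE E m hE hm (M+2) u ?_ ?_ 0 (M+1) (by omega) (by omega) ?_
  · intro r hr
    rcases hval r with ⟨h0, hv⟩ | ⟨hM2, _⟩ | ⟨hr1, hr2, hv⟩
    · subst h0
      rw [hv, show (0:ℕ)+1 = 1 from rfl, e2]
      exact hp
    · omega
    · rw [hv]
      rcases hval (r+1) with ⟨e, _⟩ | ⟨e, hv1⟩ | ⟨_, _, hv1⟩
      · omega
      · rw [hv1, show r - 1 = M from by omega]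
        exact hq
      · rw [hv1, show r + 1 - 1 = r from by omega]
        have h := hadjw (r-1) (by omega)
        rwa [show r - 1 + 1 = r from by omega] at h
  · intro a b ha hb h
    rcases hval a with ⟨ha0, hva⟩ | ⟨haM, hva⟩ | ⟨ha1, ha2, hva⟩ <;>
      rcases hval b with ⟨hb0, hvb⟩ | ⟨hbM, hvb⟩ | ⟨hb1, hb2, hvb⟩ <;>
        rw [hva, hvb] at h
    · omega
    · exact absurd h hpq
    · exact absurd h.symm (hpw (b-1) (by omega))
    · exact absurd h.symm hpq
    · omega
    · exact absurd h.symm (hqw (b-1) (by omega))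
    · exact absurd h (hpw (a-1) (by omega))
    · exact absurd h (hqw (a-1) (by omega))
    · have := hinjw (a-1) (b-1) (by omega) (by omega) h
      omega
  · have e2' : u (0+1) = w 0 := e2
    have e4' : u (M+1+1) = q := e4
    rw [e1, e2', e3, e4']
    exact hcr

lemma getVert_inj {V : Type*} {G : SimpleGraph V} {a b : V} (π : G.Walk a b) (hπ : π.IsPath) :
    ∀ s t, s ≤ π.length → t ≤ π.length → π.getVert s = π.getVert t → s = t := by
  induction π with
  | nil => intro s t hs ht _; simp at hs ht; omega
  | @cons x y z h q IH =>
    rw [SimpleGraph.Walk.cons_isPath_iff] at hπ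
    intro s t hs ht heq
    match s, t with
    | 0, 0 => rfl
    | 0, t+1 =>
      exfalso
      apply hπ.2
      rw [SimpleGraph.Walk.mem_support_iff_exists_getVert]
      refine ⟨t, ?_, ?_⟩
      · simpa using heq.symm
      · simpa using ht
    | s+1, 0 =>
      exfalso
      apply hπ.2
      rw [SimpleGraph.Walk.mem_support_iff_exists_getVert]
      refine ⟨s, ?_, ?_⟩
      · simpa using heq
      · simpa using hs
    | s+1, t+1 =>
      have := IH hπ.1 s t (by simpa using hs) (by simpa using ht)
        (by simpa [SimpleGraph.Walk.getVert_cons_succ] using heq)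
      omega

/-- An ordered tree of interval chromatic number two containing crossing
edges i'j and ij' with i' < i < j < j' and ij not an edge contains a copy of one of the
ordered paths P, Q, R (i.e. of a crossing three-edge path of interval chromatic
number two). -/
theorem stmt_10 (E : Finset (ℕ × ℕ)) (hTree : PatTree E) (hchi : IntervalChrom2 E)
    (i' i j j' : ℕ) (h1 : i' < i) (h2 : i < j) (h3 : j < j')
    (e1 : (i', j) ∈ E) (e2 : (i, j') ∈ E) (e3 : (i, j) ∉ E) :
    ∃ W : Finset (ℕ × ℕ), CrossingP3 W ∧ PatContains E W := by
  obtain ⟨hE, _, hconn⟩ := hTree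
  obtain ⟨m, hm⟩ := hchi
  have hiv : i ∈ verts E := Finset.mem_union_left _ (Finset.mem_image.2 ⟨(i,j'), e2, rfl⟩)
  have hi'v : i' ∈ verts E := Finset.mem_union_left _ (Finset.mem_image.2 ⟨(i',j), e1, rfl⟩)
  obtain ⟨π₀⟩ := hconn i hiv i' hi'v
  set π := π₀.bypass with hπdef
  have hπ : π.IsPath := SimpleGraph.Walk.bypass_isPath π₀
  set v : ℕ → ℕ := π.getVert with hvdef
  set n := π.length with hndef
  have hv0 : v 0 = i := π.getVert_zero
  have hvn : v n = i' := π.getVert_length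
  have hadjv : ∀ k, k < n → adjE E (v k) (v (k+1)) := by
    intro k hk
    have h := π.adj_getVert_succ hk
    exact ((SimpleGraph.fromRel_adj _ _ _).1 h).2
  have hinjv : ∀ a b, a ≤ n → b ≤ n → v a = v b → a = b := getVert_inj π hπ
  have hn1 : 1 ≤ n := by
    by_contra hc
    have hn0 : n = 0 := by omega
    have : i = i' := by rw [← hv0, ← hvn, hn0]
    omega
  by_cases hj' : j' ∈ π.support
  · rw [SimpleGraph.Walk.mem_support_iff_exists_getVert] at hj'
    obtain ⟨r, hvr, hrn⟩ := hj'
    replace hvr : v r = j' := hvr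
    replace hrn : r ≤ n := hrn
    have hr1 : 1 ≤ r := by
      by_contra hc
      have h0 : r = 0 := by omega
      rw [h0, hv0] at hvr
      omega
    have hrn' : r < n := by
      by_contra hc
      have h0 : r = n := by omega
      rw [h0, hvn] at hvr
      omega
    by_cases hj : j ∈ π.support
    · rw [SimpleGraph.Walk.mem_support_iff_exists_getVert] at hj
      obtain ⟨r', hvr', hr'n⟩ := hj
      replace hvr' : v r' = j := hvr'
      replace hr'n : r' ≤ n := hr'n
      have hrr' : r ≠ r' := by
        intro h
        rw [h, hvr'] at hvr
        omega
      have hr'1 : 1 ≤ r' := by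
        by_contra hc
        have h0 : r' = 0 := by omega
        rw [h0, hv0] at hvr'
        omega
      have hr'n' : r' < n := by
        by_contra hc
        have h0 : r' = n := by omega
        rw [h0, hvn] at hvr'
        omega
      rcases Nat.lt_or_ge r r' with hlt | hge
      · -- segment j' .. j forward ; i in front, i' at the end
        refine extend2 E m hE hm (r' - r) (by omega) (fun k => v (r + k))
          (fun k hk => hadjv (r+k) (by omega)) ?_ i i' ?_ ?_ ?_ ?_ (by omega) ?_
        · intro a b ha hb h
          have := hinjv (r+a) (r+b) (by omega) (by omega) h
          omega
        · show adjE E i (v (r+0))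
          rw [show r+0 = r from rfl, hvr]
          exact Or.inl e2
        · show adjE E (v (r+(r'-r))) i'
          rw [show r+(r'-r) = r' from by omega, hvr']
          exact Or.inr e1
        · intro k hk h
          have h0 : v (r+k) = v 0 := by rw [hv0]; exact h
          have := hinjv (r+k) 0 (by omega) (by omega) h0
          omega
        · intro k hk h
          have h0 : v (r+k) = v n := by rw [hvn]; exact h
          have := hinjv (r+k) n (by omega) (by omega) h0
          omega
        · show CrossE' i (v (r+0)) (v (r+(r'-r))) i'
          rw [show r+0 = r from rfl, hvr, show r+(r'-r) = r' from by omega, hvr']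
          simp only [CrossE', CrossA]
          omega
      · -- r' < r : segment j' .. j backwards
        have hlt : r' < r := by omega
        refine extend2 E m hE hm (r - r') (by omega) (fun k => v (r - k)) ?_ ?_ i i'
          ?_ ?_ ?_ ?_ (by omega) ?_
        · intro k hk
          have h := hadjv (r - k - 1) (by omega)
          rw [show r - k - 1 + 1 = r - k from by omega] at h
          show adjE E (v (r - k)) (v (r - (k+1)))
          rw [show r - (k+1) = r - k - 1 from by omega]
          exact adjE_symm h
        · intro a b ha hb h
          have := hinjv (r-a) (r-b) (by omega) (by omega) h
          omega
        · show adjE E i (v (r-0))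
          rw [show r-0 = r from rfl, hvr]
          exact Or.inl e2
        · show adjE E (v (r-(r-r'))) i'
          rw [show r-(r-r') = r' from by omega, hvr']
          exact Or.inr e1
        · intro k hk h
          have h0 : v (r-k) = v 0 := by rw [hv0]; exact h
          have := hinjv (r-k) 0 (by omega) (by omega) h0
          omega
        · intro k hk h
          have h0 : v (r-k) = v n := by rw [hvn]; exact h
          have := hinjv (r-k) n (by omega) (by omega) h0
          omega
        · show CrossE' i (v (r-0)) (v (r-(r-r'))) i'
          rw [show r-0 = r from rfl, hvr, show r-(r-r') = r' from by omega, hvr']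
          simp only [CrossE', CrossA]
          omega
    · -- j' on the path, j not
      refine extend2 E m hE hm (n - r) (by omega) (fun k => v (r + k))
        (fun k hk => hadjv (r+k) (by omega)) ?_ i j ?_ ?_ ?_ ?_ (by omega) ?_
      · intro a b ha hb h
        have := hinjv (r+a) (r+b) (by omega) (by omega) h
        omega
      · show adjE E i (v (r+0))
        rw [show r+0 = r from rfl, hvr]
        exact Or.inl e2
      · show adjE E (v (r+(n-r))) j
        rw [show r+(n-r) = n from by omega, hvn]
        exact Or.inl e1
      · intro k hk h
        have h0 : v (r+k) = v 0 := by rw [hv0]; exact h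
        have := hinjv (r+k) 0 (by omega) (by omega) h0
        omega
      · intro k hk h
        exact hj (SimpleGraph.Walk.mem_support_iff_exists_getVert.2 ⟨r+k, h, by omega⟩)
      · show CrossE' i (v (r+0)) (v (r+(n-r))) j
        rw [show r+0 = r from rfl, hvr, show r+(n-r) = n from by omega, hvn]
        simp only [CrossE', CrossA]
        omega
  · by_cases hj : j ∈ π.support
    · -- j on the path, j' not : reversed initial segment
      rw [SimpleGraph.Walk.mem_support_iff_exists_getVert] at hj
      obtain ⟨r', hvr', hr'n⟩ := hj
      replace hvr' : v r' = j := hvr'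
      replace hr'n : r' ≤ n := hr'n
      have hr'1 : 1 ≤ r' := by
        by_contra hc
        have h0 : r' = 0 := by omega
        rw [h0, hv0] at hvr'
        omega
      have hr'n' : r' < n := by
        by_contra hc
        have h0 : r' = n := by omega
        rw [h0, hvn] at hvr'
        omega
      refine extend2 E m hE hm r' (by omega) (fun k => v (r' - k)) ?_ ?_ i' j'
        ?_ ?_ ?_ ?_ (by omega) ?_
      · intro k hk
        have h := hadjv (r' - k - 1) (by omega)
        rw [show r' - k - 1 + 1 = r' - k from by omega] at h
        show adjE E (v (r' - k)) (v (r' - (k+1)))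
        rw [show r' - (k+1) = r' - k - 1 from by omega]
        exact adjE_symm h
      · intro a b ha hb h
        have := hinjv (r'-a) (r'-b) (by omega) (by omega) h
        omega
      · show adjE E i' (v (r'-0))
        rw [show r'-0 = r' from rfl, hvr']
        exact Or.inl e1
      · show adjE E (v (r'-r')) j'
        rw [show r'-r' = 0 from by omega, hv0]
        exact Or.inl e2
      · intro k hk h
        have h0 : v (r'-k) = v n := by rw [hvn]; exact h
        have := hinjv (r'-k) n (by omega) (by omega) h0
        omega
      · intro k hk h
        exact hj' (SimpleGraph.Walk.mem_support_iff_exists_getVert.2 ⟨r'-k, h, by omega⟩)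
      · show CrossE' i' (v (r'-0)) (v (r'-r')) j'
        rw [show r'-0 = r' from rfl, hvr', show r'-r' = 0 from by omega, hv0]
        simp only [CrossE', CrossA]
        omega
    · -- neither on the path
      refine extend2 E m hE hm n hn1 v hadjv hinjv j' j ?_ ?_ ?_ ?_ (by omega) ?_
      · rw [hv0]
        exact Or.inr e2
      · rw [hvn]
        exact Or.inl e1
      · intro k hk h
        exact hj' (SimpleGraph.Walk.mem_support_iff_exists_getVert.2 ⟨k, h, hk⟩)
      · intro k hk h
        exact hj (SimpleGraph.Walk.mem_support_iff_exists_getVert.2 ⟨k, h, hk⟩)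
      · rw [hv0, hvn]
        simp only [CrossE', CrossA]
        omega
end

section
/- Every ordered tree with interval chromatic number two that contains none of the three ordered paths $P$, $Q$, $R$ is a $z$-tree. -/
/-- A z-tree: union of an increasing tree T with longest edge (i,j), a set S_j of edges
(h,j) with h < i, and a set S_i of edges (i,k) with k > j. -/
def ZTree (E : Finset (ℕ × ℕ)) : Prop :=
  ∃ (T Sj Si : Finset (ℕ × ℕ)) (i j : ℕ), IncTree T i j ∧
    (∀ p ∈ Sj, p.2 = j ∧ p.1 < i) ∧ (∀ p ∈ Si, p.1 = i ∧ j < p.2) ∧ E = T ∪ Sj ∪ Si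

/-!
All edges straddle the split point `m`, so two edges sharing a vertex are nested, and on a walk
`u w x y` the first and last edges are nested too: otherwise they cross and `u w x y` is a copy of
`P`, `Q` or `R`. Hence consecutive edges nest in the same direction all along a trail, and as any
two edges lie on a common trail, the edges of the tree form a chain under nesting. Peeling off the
longest edge of such a chain, the vertex count `|V| = |E| + 1` forces it to share exactly one
endpoint with the remaining edges, so the tree is itself an increasing tree (with `S_i = S_j = ∅`).
-/

open Finset SimpleGraph Relation

namespace SimpleGraph

variable {V : Type*} {G : SimpleGraph V}

theorem Walk.IsTrail.exists_isTrail_mem_edges_of_adj {u v w : V} {p : G.Walk u v}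
    (hp : p.IsTrail) (h : G.Adj w u) :
    ∃ (x : V) (q : G.Walk x v), q.IsTrail ∧ s(w, u) ∈ q.edges ∧ p.edges ⊆ q.edges := by
  by_cases hw : s(w, u) ∈ p.edges
  · exact ⟨u, p, hp, hw, List.Subset.refl _⟩
  · exact ⟨w, .cons h p, (Walk.isTrail_cons h p).2 ⟨hp, hw⟩, by simp, by simp⟩

theorem Reachable.exists_isTrail_mem_edges {a b c d : V} (hac : G.Reachable a c)
    (hab : G.Adj a b) (hcd : G.Adj c d) :
    ∃ (x y : V) (q : G.Walk x y), q.IsTrail ∧ s(a, b) ∈ q.edges ∧ s(c, d) ∈ q.edges := by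
  obtain ⟨p, hp⟩ := hac.exists_isPath
  obtain ⟨x, q, hq, hba, -⟩ := hp.isTrail.exists_isTrail_mem_edges_of_adj hab.symm
  obtain ⟨y, r, hr, hdc, hqr⟩ := hq.reverse.exists_isTrail_mem_edges_of_adj hcd.symm
  refine ⟨y, x, r, hr, ?_, Sym2.eq_swap ▸ hdc⟩
  exact hqr (by simpa [Sym2.eq_swap] using hba)

end SimpleGraph

theorem List.IsChain.isChain_setOf_mem {α : Type*} {R : α → α → Prop} [Trans R R R]
    {l : List α} (h : l.IsChain R) : _root_.IsChain R {a | a ∈ l} :=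
  (h.pairwise.imp SymmGen.of_rel).set_pairwise

namespace OrderedTree

def Nested (e f : ℕ × ℕ) : Prop := f.1 ≤ e.1 ∧ e.2 ≤ f.2

theorem Nested.trans {e f g : ℕ × ℕ} (h₁ : Nested e f) (h₂ : Nested f g) : Nested e g :=
  ⟨h₂.1.trans h₁.1, h₁.2.trans h₂.2⟩

instance : Trans Nested Nested Nested := ⟨Nested.trans⟩

instance : Std.Refl Nested := ⟨fun _ => ⟨le_rfl, le_rfl⟩⟩

def edgeSpan (e : Sym2 ℕ) : ℕ × ℕ := (e.inf, e.sup)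

theorem edgeSpan_mk_of_le {a b : ℕ} (h : a ≤ b) : edgeSpan s(a, b) = (a, b) := by
  simp [edgeSpan, h]

variable {E : Finset (ℕ × ℕ)} {m : ℕ}

theorem lt_of_straddle (hm : ∀ p ∈ E, p.1 ≤ m ∧ m < p.2) : ∀ p ∈ E, p.1 < p.2 :=
  fun p hp => (hm p hp).1.trans_lt (hm p hp).2

theorem adj_of_mem (hlt : ∀ p ∈ E, p.1 < p.2) {p : ℕ × ℕ} (hp : p ∈ E) :
    (patGraph E).Adj p.1 p.2 :=
  (SimpleGraph.fromRel_adj _ _ _).2 ⟨(hlt p hp).ne, .inl hp⟩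

theorem edgeSpan_mem_of_adj (hlt : ∀ p ∈ E, p.1 < p.2) {a b : ℕ} (h : (patGraph E).Adj a b) :
    edgeSpan s(a, b) ∈ E := by
  obtain ⟨-, hab | hba⟩ := (SimpleGraph.fromRel_adj _ _ _).1 h
  · rwa [edgeSpan_mk_of_le (hlt _ hab).le]
  · rwa [Sym2.eq_swap, edgeSpan_mk_of_le (hlt _ hba).le]

theorem symmGen_nested_of_adj_adj (hm : ∀ p ∈ E, p.1 ≤ m ∧ m < p.2) {u w x : ℕ}
    (h : (patGraph E).Adj u w) (h' : (patGraph E).Adj w x) :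
    SymmGen Nested (edgeSpan s(u, w)) (edgeSpan s(w, x)) := by
  have s₀ := hm _ (edgeSpan_mem_of_adj (lt_of_straddle hm) h)
  have s₁ := hm _ (edgeSpan_mem_of_adj (lt_of_straddle hm) h')
  simp only [SymmGen, Nested, edgeSpan, Sym2.inf_mk, Sym2.sup_mk] at s₀ s₁ ⊢
  omega

theorem symmGen_nested_of_adj_adj_adj (hm : ∀ p ∈ E, p.1 ≤ m ∧ m < p.2)
    (hfree : ∀ W : Finset (ℕ × ℕ), CrossingP3 W → ¬ PatContains E W) {u w x y : ℕ}
    (h : (patGraph E).Adj u w) (h' : (patGraph E).Adj w x) (h'' : (patGraph E).Adj x y) :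
    SymmGen Nested (edgeSpan s(u, w)) (edgeSpan s(x, y)) := by
  have hlt := lt_of_straddle hm
  have e₀ := edgeSpan_mem_of_adj hlt h
  have e₁ := edgeSpan_mem_of_adj hlt h'
  have e₂ := edgeSpan_mem_of_adj hlt h''
  have s₀ := hm _ e₀
  have s₁ := hm _ e₁
  have s₂ := hm _ e₂
  simp only [edgeSpan, Sym2.inf_mk, Sym2.sup_mk] at e₀ e₁ e₂ s₀ s₁ s₂ ⊢
  by_contra hc
  simp only [SymmGen, Nested, not_or, not_and_or, not_le] at hc
  refine hfree {(min u w, max u w), (min w x, max w x), (min x y, max x y)}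
    ⟨⟨u, w, x, y, ?_, rfl⟩, ⟨m, ?_⟩, ?_⟩ ⟨id, fun _ _ _ _ hxy => hxy, ?_⟩
  · simp only [List.nodup_cons, List.mem_cons, List.not_mem_nil, List.nodup_nil, or_false,
      not_false_eq_true, and_true]
    omega
  · simp only [mem_insert, mem_singleton, forall_eq_or_imp, forall_eq]
    exact ⟨s₀, s₁, s₂⟩
  · by_cases hlo : min u w < min x y
    · exact ⟨(min u w, max u w), by simp, (min x y, max x y), by simp, hlo, by omega, by omega⟩
    · exact ⟨(min x y, max x y), by simp, (min u w, max u w), by simp, by omega, by omega,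
        by omega⟩
  · simp only [mem_insert, mem_singleton, forall_eq_or_imp, forall_eq, id]
    exact ⟨e₀, e₁, e₂⟩

theorem nested_propagate_of_adj_adj_adj (hm : ∀ p ∈ E, p.1 ≤ m ∧ m < p.2) {u w x y : ℕ}
    (h : (patGraph E).Adj u w) (h' : (patGraph E).Adj w x) (h'' : (patGraph E).Adj x y)
    (hwy : w ≠ y) (hc : SymmGen Nested (edgeSpan s(u, w)) (edgeSpan s(x, y))) :
    (Nested (edgeSpan s(w, x)) (edgeSpan s(x, y)) →
        Nested (edgeSpan s(u, w)) (edgeSpan s(w, x))) ∧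
      (Nested (edgeSpan s(x, y)) (edgeSpan s(w, x)) →
        Nested (edgeSpan s(w, x)) (edgeSpan s(u, w))) := by
  have s₀ := hm _ (edgeSpan_mem_of_adj (lt_of_straddle hm) h)
  have s₁ := hm _ (edgeSpan_mem_of_adj (lt_of_straddle hm) h')
  have s₂ := hm _ (edgeSpan_mem_of_adj (lt_of_straddle hm) h'')
  simp only [SymmGen, Nested, edgeSpan, Sym2.inf_mk, Sym2.sup_mk] at s₀ s₁ s₂ hc ⊢
  omega

theorem isChain_nested_or_of_isTrail (hm : ∀ p ∈ E, p.1 ≤ m ∧ m < p.2)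
    (hfree : ∀ W : Finset (ℕ × ℕ), CrossingP3 W → ¬ PatContains E W) :
    ∀ {u v : ℕ} {p : (patGraph E).Walk u v}, p.IsTrail →
      (p.edges.map edgeSpan).IsChain Nested ∨
        (p.edges.map edgeSpan).IsChain (fun e f => Nested f e)
  | _, _, .nil, _ => by simp
  | _, _, .cons _ .nil, _ => by simp
  | _, _, .cons h (.cons h' .nil), _ => by
    simp only [Walk.edges_cons, Walk.edges_nil, List.map_cons, List.map_nil, List.isChain_pair]
    exact symmGen_nested_of_adj_adj hm h h'
  | _, _, .cons (v := w) h (.cons h' (.cons (v := y) h'' q)), hp => by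
    have hwy : w ≠ y := by
      rintro rfl
      simp [Sym2.eq_swap] at hp
    have hstep := nested_propagate_of_adj_adj_adj hm h h' h'' hwy (symmGen_nested_of_adj_adj_adj hm hfree h h' h'')
    rcases isChain_nested_or_of_isTrail hm hfree hp.of_cons with hup | hdown
    · left
      simp only [Walk.edges_cons, List.map_cons, List.isChain_cons_cons] at hup ⊢
      exact ⟨hstep.1 hup.1, hup⟩
    · right
      simp only [Walk.edges_cons, List.map_cons, List.isChain_cons_cons] at hdown ⊢
      exact ⟨hstep.2 hdown.1, hdown⟩

theorem isChain_nested_of_isTrail (hm : ∀ p ∈ E, p.1 ≤ m ∧ m < p.2)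
    (hfree : ∀ W : Finset (ℕ × ℕ), CrossingP3 W → ¬ PatContains E W) {u v : ℕ}
    {p : (patGraph E).Walk u v} (hp : p.IsTrail) :
    IsChain Nested {e | e ∈ p.edges.map edgeSpan} := by
  rcases isChain_nested_or_of_isTrail hm hfree hp with h | h
  · exact h.isChain_setOf_mem
  · simpa using (List.isChain_reverse.2 h).isChain_setOf_mem

theorem isChain_nested (hm : ∀ p ∈ E, p.1 ≤ m ∧ m < p.2)
    (hconn : ∀ a ∈ verts E, ∀ b ∈ verts E, (patGraph E).Reachable a b)
    (hfree : ∀ W : Finset (ℕ × ℕ), CrossingP3 W → ¬ PatContains E W) :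
    IsChain Nested (E : Set (ℕ × ℕ)) := by
  intro e he f hf _
  have hlt := lt_of_straddle hm
  have hreach := hconn e.1 (mem_union_left _ (mem_image_of_mem _ he))
    f.1 (mem_union_left _ (mem_image_of_mem _ hf))
  obtain ⟨x, y, q, hq, he', hf'⟩ :=
    hreach.exists_isTrail_mem_edges (adj_of_mem hlt he) (adj_of_mem hlt hf)
  have := (isChain_nested_of_isTrail hm hfree hq).total (List.mem_map_of_mem he')
    (List.mem_map_of_mem hf')
  rwa [edgeSpan_mk_of_le (hlt e he).le, edgeSpan_mk_of_le (hlt f hf).le] at this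

theorem _root_.IncTree.mem {T : Finset (ℕ × ℕ)} {i j : ℕ} (hT : IncTree T i j) : (i, j) ∈ T := by
  cases hT <;> simp

theorem _root_.IncTree.nested {T : Finset (ℕ × ℕ)} {i j : ℕ} (hT : IncTree T i j) :
    ∀ g ∈ T, Nested g (i, j) := by
  induction hT with
  | single i j _ => simp [Nested]
  | right T i j j' _ hj ih =>
    simp only [mem_insert, forall_eq_or_imp]
    exact ⟨⟨le_rfl, le_rfl⟩, fun g hg => (ih g hg).trans ⟨le_rfl, hj.le⟩⟩
  | left T i j i' _ hi ih =>
    simp only [mem_insert, forall_eq_or_imp]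
    exact ⟨⟨le_rfl, le_rfl⟩, fun g hg => (ih g hg).trans ⟨hi.le, le_rfl⟩⟩

theorem _root_.IncTree.insert_of_fst_mem {T : Finset (ℕ × ℕ)} {i j a b : ℕ} (hT : IncTree T i j)
    (hab : (a, b) ∉ T) (hnest : ∀ g ∈ T, Nested g (a, b)) (ha : a ∈ T.image Prod.fst) :
    IncTree (insert (a, b) T) a b := by
  obtain ⟨g, hg, rfl⟩ := mem_image.1 ha
  have h₁ := hT.nested g hg
  have h₂ := hnest _ hT.mem
  have hne : (i, j) ≠ (g.1, b) := ne_of_mem_of_not_mem hT.mem hab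
  simp only [Nested, ne_eq, Prod.mk.injEq] at h₁ h₂ hne
  obtain rfl : g.1 = i := by omega
  exact hT.right T _ j b (by omega)

theorem _root_.IncTree.insert_of_snd_mem {T : Finset (ℕ × ℕ)} {i j a b : ℕ} (hT : IncTree T i j)
    (hab : (a, b) ∉ T) (hnest : ∀ g ∈ T, Nested g (a, b)) (hb : b ∈ T.image Prod.snd) :
    IncTree (insert (a, b) T) a b := by
  obtain ⟨g, hg, rfl⟩ := mem_image.1 hb
  have h₁ := hT.nested g hg
  have h₂ := hnest _ hT.mem
  have hne : (i, j) ≠ (a, g.2) := ne_of_mem_of_not_mem hT.mem hab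
  simp only [Nested, ne_eq, Prod.mk.injEq] at h₁ h₂ hne
  obtain rfl : g.2 = j := by omega
  exact hT.left T i _ a (by omega)

theorem not_fst_mem_and_snd_mem {T : Finset (ℕ × ℕ)} {f : ℕ × ℕ} (hf : f ∉ T)
    (hT : IsChain Nested (T : Set (ℕ × ℕ))) (hnest : ∀ g ∈ T, Nested g f) :
    ¬ (f.1 ∈ T.image Prod.fst ∧ f.2 ∈ T.image Prod.snd) := by
  rintro ⟨h₁, h₂⟩
  obtain ⟨g, hg, hg₁⟩ := mem_image.1 h₁
  obtain ⟨k, hk, hk₂⟩ := mem_image.1 h₂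
  have hgf : g ≠ f := ne_of_mem_of_not_mem hg hf
  have hkf : k ≠ f := ne_of_mem_of_not_mem hk hf
  have hgk := hT.total (mem_coe.2 hg) (mem_coe.2 hk)
  have := hnest g hg
  have := hnest k hk
  simp only [Nested, ne_eq, Prod.ext_iff] at *
  omega

theorem nested_of_isChain_insert {T : Finset (ℕ × ℕ)} {f : ℕ × ℕ} (hf : f.1 < f.2)
    (hS : IsChain Nested (insert f T : Set (ℕ × ℕ)))
    (hmax : ∀ g ∈ T, g.2 - g.1 ≤ f.2 - f.1) : ∀ g ∈ T, Nested g f := by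
  intro g hg
  have hgf := hS.total (Set.mem_insert_of_mem f (mem_coe.2 hg)) (Set.mem_insert f _)
  have := hmax g hg
  simp only [Nested] at hgf ⊢
  omega

theorem card_add_one_le_card_image_add_card_image {S : Finset (ℕ × ℕ)} (hne : S.Nonempty)
    (hlt : ∀ e ∈ S, e.1 < e.2) (hS : IsChain Nested (S : Set (ℕ × ℕ))) :
    #S + 1 ≤ #(S.image Prod.fst) + #(S.image Prod.snd) := by
  induction S using Finset.induction_on_max_value (fun e : ℕ × ℕ => e.2 - e.1) with
  | empty => simp at hne
  | insert f T hfT hmax ih =>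
    have hT : IsChain Nested (T : Set (ℕ × ℕ)) := hS.mono (by simp)
    have hnest := nested_of_isChain_insert (hlt f (mem_insert_self f T)) (by simpa using hS) hmax
    have hnb := not_fst_mem_and_snd_mem hfT hT hnest
    rw [card_insert_of_notMem hfT, image_insert, image_insert, card_insert_eq_ite,
      card_insert_eq_ite]
    rcases T.eq_empty_or_nonempty with rfl | hTne
    · simp
    · have := ih hTne (fun e he => hlt e (mem_insert_of_mem he)) hT
      split_ifs with h₁ h₂
      · exact absurd ⟨h₁, h₂⟩ hnb
      all_goals omega

theorem exists_incTree {S : Finset (ℕ × ℕ)} (hne : S.Nonempty) (hlt : ∀ e ∈ S, e.1 < e.2)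
    (hS : IsChain Nested (S : Set (ℕ × ℕ)))
    (hcard : #(S.image Prod.fst) + #(S.image Prod.snd) = #S + 1) : ∃ i j, IncTree S i j := by
  induction S using Finset.induction_on_max_value (fun e : ℕ × ℕ => e.2 - e.1) with
  | empty => simp at hne
  | insert f T hfT hmax ih =>
    obtain ⟨a, b⟩ := f
    rcases T.eq_empty_or_nonempty with rfl | hTne
    · exact ⟨a, b, IncTree.single a b (hlt _ (mem_insert_self _ _))⟩
    have hltT : ∀ e ∈ T, e.1 < e.2 := fun e he => hlt e (mem_insert_of_mem he)
    have hT : IsChain Nested (T : Set (ℕ × ℕ)) := hS.mono (by simp)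
    have hnest := nested_of_isChain_insert (hlt _ (mem_insert_self _ T)) (by simpa using hS) hmax
    have hbound := card_add_one_le_card_image_add_card_image hTne hltT hT
    rw [card_insert_of_notMem hfT, image_insert, image_insert, card_insert_eq_ite,
      card_insert_eq_ite] at hcard
    split_ifs at hcard with ha hb hb
    · exact absurd ⟨ha, hb⟩ (not_fst_mem_and_snd_mem hfT hT hnest)
    · obtain ⟨i, j, hij⟩ := ih hTne hltT hT (by omega)
      exact ⟨a, b, hij.insert_of_fst_mem hfT hnest ha⟩
    · obtain ⟨i, j, hij⟩ := ih hTne hltT hT (by omega)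
      exact ⟨a, b, hij.insert_of_snd_mem hfT hnest hb⟩
    · omega

theorem card_verts_of_straddle (hm : ∀ p ∈ E, p.1 ≤ m ∧ m < p.2) :
    #(verts E) = #(E.image Prod.fst) + #(E.image Prod.snd) := by
  refine card_union_of_disjoint (disjoint_left.2 fun x hx hx' => ?_)
  obtain ⟨p, hp, rfl⟩ := mem_image.1 hx
  obtain ⟨q, hq, hqp⟩ := mem_image.1 hx'
  have := hm p hp
  have := hm q hq
  omega

end OrderedTree

/-- Every ordered tree of interval chromatic number two containing none of
the three crossing three-edge ordered paths P, Q, R is a z-tree. -/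
theorem stmt_11 (E : Finset (ℕ × ℕ)) (hTree : PatTree E) (hchi : IntervalChrom2 E)
    (hfree : ∀ W : Finset (ℕ × ℕ), CrossingP3 W → ¬ PatContains E W) :
    ZTree E := by
  obtain ⟨hlt, hcard, hconn⟩ := hTree
  obtain ⟨m, hm⟩ := hchi
  rw [OrderedTree.card_verts_of_straddle hm] at hcard
  have hne : E.Nonempty := by
    rw [nonempty_iff_ne_empty]
    rintro rfl
    simp at hcard
  obtain ⟨i, j, hT⟩ :=
    OrderedTree.exists_incTree hne hlt (OrderedTree.isChain_nested hm hconn hfree) hcard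
  exact ⟨E, ∅, ∅, i, j, hT, by simp, by simp, by simp⟩
end

section
/- For $n=2^k$, the graph $F_n$ with vertex set $\{1,\dots,n\}$ and edge set $\{\{2i-1,\,2i-2+2^j\} : i\in[n/4],\ 1\le j\le k-1\}$ contains no path $v_{i_1}v_{i_2}v_{i_3}v_{i_4}$ with $i_2 < i_4 < i_1 < i_3$ (a 'heavy path'). -/
/-- For n = 2^k, the graph F_n on {1,…,n} with edges
{2i-1, 2i-2+2^j} (i ∈ [n/4], 1 ≤ j ≤ k-1) contains no "heavy path", i.e. no path
v_{i₁}v_{i₂}v_{i₃}v_{i₄} with i₂ < i₄ < i₁ < i₃. -/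
theorem stmt_14 (k n : ℕ) (hk : 2 ≤ k) (hn : n = 2 ^ k)
    (E : Finset (ℕ × ℕ))
    (hE : E = (Finset.Icc 1 (k - 1)).biUnion
        (fun j => (Finset.range (n / 4)).image (fun i => (2 * i + 1, 2 * i + 2 ^ j)))) :
    ¬ ∃ i1 i2 i3 i4 : ℕ, i2 < i4 ∧ i4 < i1 ∧ i1 < i3 ∧
        ((i1, i2) ∈ E ∨ (i2, i1) ∈ E) ∧ ((i2, i3) ∈ E ∨ (i3, i2) ∈ E) ∧
        ((i3, i4) ∈ E ∨ (i4, i3) ∈ E) := by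
  rintro ⟨i1, i2, i3, i4, h24, h41, h13, he1, he2, he3⟩
  subst hE
  simp only [Finset.mem_biUnion, Finset.mem_image, Finset.mem_range, Finset.mem_Icc,
    Prod.mk.injEq] at he1 he2 he3
  -- canonical form of each edge: smaller endpoint is odd
  have key : ∀ x y : ℕ, x < y →
      ((∃ j, (1 ≤ j ∧ j ≤ k - 1) ∧ ∃ i, i < n / 4 ∧ 2 * i + 1 = y ∧ 2 * i + 2 ^ j = x) ∨
       (∃ j, (1 ≤ j ∧ j ≤ k - 1) ∧ ∃ i, i < n / 4 ∧ 2 * i + 1 = x ∧ 2 * i + 2 ^ j = y)) →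
      ∃ a j, 1 ≤ j ∧ x = 2 * a + 1 ∧ y = 2 * a + 2 ^ j := by
    rintro x y hxy (⟨j, ⟨hj, _⟩, i, _, hx, hy⟩ | ⟨j, ⟨hj, _⟩, i, _, hx, hy⟩)
    · exfalso
      have h2 : 1 < 2 ^ j := Nat.one_lt_two_pow_iff.mpr (by omega)
      omega
    · exact ⟨i, j, hj, hx.symm, hy.symm⟩
  obtain ⟨a, j1, hj1, ha1, ha2⟩ := key i2 i1 (by omega) he1
  obtain ⟨b, j2, hj2, hb1, hb2⟩ := key i2 i3 (by omega) he2.symm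
  obtain ⟨c, j3, hj3, hc1, hc2⟩ := key i4 i3 (by omega) he3
  have hab : a = b := by omega
  subst hab
  have h12 : j1 < j2 := by
    have := (Nat.pow_lt_pow_iff_right (a := 2) one_lt_two).mp (show 2 ^ j1 < 2 ^ j2 by omega)
    exact this
  have h32 : j3 < j2 := by
    have : 2 ^ j3 < 2 ^ j2 := by omega
    exact (Nat.pow_lt_pow_iff_right (a := 2) one_lt_two).mp this
  have e1 : 2 * 2 ^ j1 ≤ 2 ^ j2 := by
    calc 2 * 2 ^ j1 = 2 ^ (j1 + 1) := (pow_succ' 2 j1).symm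
    _ ≤ 2 ^ j2 := Nat.pow_le_pow_right (by norm_num) (by omega)
  have e3 : 2 * 2 ^ j3 ≤ 2 ^ j2 := by
    calc 2 * 2 ^ j3 = 2 ^ (j3 + 1) := (pow_succ' 2 j3).symm
    _ ≤ 2 ^ j2 := Nat.pow_le_pow_right (by norm_num) (by omega)
  omega
end
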